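/- arXiv:1306.0509 — 2 statements merged into one kernel-verified Lean document; each statement's English description precedes it below -/
import Mathlib

section
/- For all real c, a with 0 < c < a, the Gauss hypergeometric function satisfies ₂F₁(1/2, 1; 5/2; 1 − c²/a²) = (3/2)·[ 1/(1−c²/a²) − (1/2)·(c²/a²)/(1−c²/a²)^{3/2} · log((1+√(1−c²/a²))/(1−√(1−c²/a²))) ]. -/
open MeasureTheory Real

/-- Pochhammer symbol `(a)_n = a(a+1)⋯(a+n-1)`. -/
noncomputable def poch (a : ℝ) (n : ℕ) : ℝ := ∏ i ∈ Finset.range n, (a + i)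

/-- Gauss hypergeometric series `₂F₁(a,b;c;x)`. -/
noncomputable def gaussF (a b c x : ℝ) : ℝ :=
  ∑' n : ℕ, poch a n * poch b n / (poch c n * n.factorial) * x ^ n

lemma poch_succ (a : ℝ) (n : ℕ) : poch a (n+1) = poch a n * (a + n) :=
  Finset.prod_range_succ _ _

lemma poch_one (n : ℕ) : poch 1 n = n.factorial := by
  induction n with
  | zero => simp [poch]
  | succ k ih =>
    rw [poch_succ, ih, Nat.factorial_succ]
    push_cast; ring

lemma poch_key (n : ℕ) :
    poch (5/2) n * 3 = poch (1/2) n * (2*n+1) * (2*n+3) := by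
  induction n with
  | zero => simp [poch]
  | succ k ih =>
    rw [poch_succ, poch_succ]
    push_cast
    nlinarith [ih]

lemma poch_half_pos (n : ℕ) : 0 < poch (1/2) n := by
  apply Finset.prod_pos
  intro i _
  positivity

/-- `₂F₁(1/2,1;5/2;1-c²/a²)` in closed form, for `0 < c < a`. -/
theorem gaussF_half_one_fivehalf (c a : ℝ) (hc : 0 < c) (hca : c < a) :
    gaussF (1/2) 1 (5/2) (1 - c^2/a^2)
      = (3/2) * ( 1/(1 - c^2/a^2)
          - (1/2) * (c^2/a^2) / (1 - c^2/a^2) ^ ((3:ℝ)/2)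
              * Real.log ((1 + Real.sqrt (1 - c^2/a^2)) / (1 - Real.sqrt (1 - c^2/a^2))) ) := by
  have ha : 0 < a := hc.trans hca
  set x : ℝ := 1 - c^2/a^2 with hxdef
  have hr1 : c^2/a^2 < 1 := by
    rw [div_lt_one (by positivity)]
    exact pow_lt_pow_left₀ hca hc.le (by norm_num)
  have hx0 : 0 < x := by simp only [hxdef]; linarith
  have hx1 : x < 1 := by
    have : 0 < c^2/a^2 := by positivity
    simp only [hxdef]; linarith
  set t : ℝ := Real.sqrt x with htdef
  have ht0 : 0 < t := Real.sqrt_pos.2 hx0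
  have ht2 : t^2 = x := Real.sq_sqrt hx0.le
  have ht1 : t < 1 := by nlinarith
  set L : ℝ := Real.log ((1 + t) / (1 - t)) with hLdef
  have hL : L = Real.log (1 + t) - Real.log (1 - t) :=
    Real.log_div (by linarith) (by linarith)
  have H := hasSum_log_sub_log_of_abs_lt_one (x := t) (by rw [abs_of_pos ht0]; exact ht1)
  rw [← hL] at H
  have Hu : HasSum (fun k : ℕ => x ^ k / (2*k+1)) (L / (2*t)) := by
    have h := H.mul_left (1 / (2*t))
    have e1 : (fun i : ℕ => 1/(2*t) * (2*(1/(2*(i:ℝ)+1))*t^(2*i+1)))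
        = fun k : ℕ => x ^ k / (2*(k:ℝ)+1) := by
      funext k
      have hp : t^(2*k+1) = t * x^k := by rw [← ht2]; ring
      have hk : (0:ℝ) < 2*(k:ℝ)+1 := by positivity
      rw [hp]
      field_simp
    have e2 : 1/(2*t) * L = L/(2*t) := by ring
    rwa [e1, e2] at h
  have Hu' := (hasSum_nat_add_iff' (f := fun k : ℕ => x ^ k / (2*(k:ℝ)+1)) 1).2 Hu
  simp only [Finset.range_one, Finset.sum_singleton, pow_zero, Nat.cast_zero] at Hu'
  norm_num at Hu'
  have Hv : HasSum (fun k : ℕ => x ^ k / (2*k+3)) ((L / (2*t) - 1) / x) := by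
    have h := Hu'.mul_left (1/x)
    have e1 : (fun i : ℕ => 1/x * (x^(i+1) / (2*((i:ℝ)+1)+1)))
        = fun k : ℕ => x ^ k / (2*(k:ℝ)+3) := by
      funext k
      have hk : (0:ℝ) < 2*(k:ℝ)+3 := by positivity
      rw [pow_succ]
      field_simp
      ring
    have e2 : 1/x * (L/(2*t) - 1) = (L/(2*t) - 1)/x := by ring
    rwa [e1, e2] at h
  have Hf := (Hu.sub Hv).mul_left (3/2)
  have hgauss : gaussF (1/2) 1 (5/2) x
      = (3/2) * (L / (2*t) - (L / (2*t) - 1) / x) := by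
    rw [gaussF, ← Hf.tsum_eq]
    congr 1 with n
    have hp := poch_half_pos n
    have hk := poch_key n
    have h1 : (0:ℝ) < 2*(n:ℝ)+1 := by positivity
    have h3 : (0:ℝ) < 2*(n:ℝ)+3 := by positivity
    have hfac : (0:ℝ) < n.factorial := by exact_mod_cast n.factorial_pos
    have h5 : poch (5/2) n = poch (1/2) n * (2*n+1) * (2*n+3) / 3 := by
      linarith
    rw [poch_one, h5]
    field_simp
    ring
  rw [hgauss]
  have hca2 : c^2/a^2 = 1 - x := by rw [hxdef]; ring
  have hx32 : x ^ ((3:ℝ)/2) = t^3 := by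
    rw [htdef, Real.sqrt_eq_rpow, ← Real.rpow_natCast (x ^ (1/(2:ℝ))) 3,
      ← Real.rpow_mul hx0.le]
    norm_num
  rw [hca2, hx32, ← ht2]
  field_simp
  ring
end

section
/- For a > b > c > 0, set ε = 1 − c²/b² and δ = 1 − c²/a². Then ∫₀¹ √(1 − δt²) · ₂F₁(1/2, −1/2; 1; ((1−t²)/(1−δt²))·ε) dt = (1−δ)·F₁(1/2; −1/2, 3/2; 3/2; ε, δ) + (δ/3)·F₁(1/2; −1/2, 3/2; 5/2; ε, δ). -/
/-!
Put `y = 1 - δt²` and `X = ε(1 - t²)/y`. Expanding `₂F₁` in powers of `X`, and then each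
`√y · y⁻ⁿ = y^(1/2 - n)` by the binomial series in `δt²`, turns the integrand into a double series
of monomials `t^(2m) (1 - t²)^n`, whose integrals are `n! (1/2)_m / (3/2)_(n+m)`. Integrating
termwise gives `F₁(-1/2; 1/2, 1/2; 3/2; ε, δ)`; its coefficients are bounded by `|ε|ⁿ |δ|ᵐ`,
which justifies the interchange, and also the rearrangement of the double series for almost
every `t`. Finally, a contiguous relation between the coefficients in the second index splits
`F₁(-1/2; 1/2, 1/2; 3/2)` into the two Appell functions of the right-hand side.
-/

open MeasureTheory Real

/-- Appell's first hypergeometric function `F₁(α;β,β';γ;x,y)`. -/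
noncomputable def appellF1 (α β β' γ x y : ℝ) : ℝ :=
  ∑' p : ℕ × ℕ, poch α (p.1 + p.2) * poch β p.1 * poch β' p.2 /
    (poch γ (p.1 + p.2) * p.1.factorial * p.2.factorial) * x ^ p.1 * y ^ p.2

lemma poch_zero (a : ℝ) : poch a 0 = 1 := by simp [poch]

lemma poch_succ_right (a : ℝ) (n : ℕ) : poch a (n + 1) = poch a n * (a + n) := by
  simp [poch, Finset.prod_range_succ]

lemma poch_add (a : ℝ) (n m : ℕ) : poch a (n + m) = poch a n * poch (a + n) m := by
  simp only [poch, Finset.prod_range_add, Nat.cast_add, add_assoc]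

lemma poch_succ_left (a : ℝ) (n : ℕ) : poch a (n + 1) = a * poch (a + 1) n := by
  rw [add_comm n, poch_add]; simp [poch]

lemma poch_pos {a : ℝ} (ha : 0 < a) (n : ℕ) : 0 < poch a n :=
  Finset.prod_pos fun i _ => by positivity

lemma poch_nonneg {a : ℝ} (ha : 0 ≤ a) (n : ℕ) : 0 ≤ poch a n :=
  Finset.prod_nonneg fun i _ => by positivity

lemma poch_le_poch {a b : ℝ} (ha : 0 ≤ a) (hab : a ≤ b) (n : ℕ) : poch a n ≤ poch b n :=
  Finset.prod_le_prod (fun i _ => by positivity) fun i _ => by linarith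

lemma abs_poch_le_poch_abs (a : ℝ) (n : ℕ) : |poch a n| ≤ poch |a| n := by
  rw [poch, Finset.abs_prod]
  exact Finset.prod_le_prod (fun i _ => abs_nonneg _) fun i _ =>
    (abs_add_le _ _).trans (by rw [Nat.abs_cast])

lemma poch_half_mul (n : ℕ) : poch (1/2) n * (1/2 + n) = 1/2 * poch (3/2) n := by
  rw [← poch_succ_right, poch_succ_left]; norm_num

lemma poch_half_le_factorial (n : ℕ) : poch (1/2) n ≤ n.factorial := by
  rw [← poch_one]; exact poch_le_poch (by norm_num) (by norm_num) n

lemma abs_poch_neg_half_le (n : ℕ) : |poch (-(1/2)) n| ≤ poch (1/2) n := by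
  simpa using abs_poch_le_poch_abs (-(1/2)) n

lemma poch_eq_ascPochhammer_eval (a : ℝ) (n : ℕ) : poch a n = (ascPochhammer ℝ n).eval a := by
  induction n with
  | zero => simp [poch]
  | succ n ih => rw [poch, Finset.prod_range_succ, ← poch, ih, ascPochhammer_succ_eval]

lemma multichoose_eq_poch_div_factorial (s : ℝ) (n : ℕ) :
    Ring.multichoose s n = poch s n / n.factorial := by
  rw [eq_div_iff (by positivity), mul_comm, ← nsmul_eq_mul,
    Ring.factorial_nsmul_multichoose_eq_ascPochhammer, Polynomial.ascPochhammer_smeval_eq_eval,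
    poch_eq_ascPochhammer_eval]

lemma hasSum_poch_div_factorial_mul_pow (s : ℝ) {x : ℝ} (hx : |x| < 1) :
    HasSum (fun m => poch s m / m.factorial * x ^ m) ((1 - x) ^ (-s)) := by
  have hx' : x ∈ Metric.eball (0 : ℝ) 1 := by
    simpa [Metric.mem_eball, edist_dist, Real.dist_eq] using hx
  have := (one_div_one_sub_rpow_hasFPowerSeriesOnBall_zero s).hasSum hx'
  simpa [FormalMultilinearSeries.ofScalars_apply_eq, ← Ring.multichoose_eq,
    multichoose_eq_poch_div_factorial, mul_comm,
    rpow_neg (by linarith [abs_lt.mp hx] : (0:ℝ) ≤ 1 - x)] using this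

lemma integral_pow_mul_one_sub_sq_pow_succ (n m : ℕ) :
    (2 * m + 1 : ℝ) * ∫ t in (0:ℝ)..1, t ^ (2 * m) * (1 - t ^ 2) ^ (n + 1)
      = (2 * n + 2 : ℝ) * ∫ t in (0:ℝ)..1, t ^ (2 * (m + 1)) * (1 - t ^ 2) ^ n := by
  have hderiv : ∀ t : ℝ, HasDerivAt (fun t => t ^ (2 * m + 1) * (1 - t ^ 2) ^ (n + 1))
      ((2 * m + 1) * (t ^ (2 * m) * (1 - t ^ 2) ^ (n + 1))
        - (2 * n + 2) * (t ^ (2 * (m + 1)) * (1 - t ^ 2) ^ n)) t := by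
    intro t
    refine ((hasDerivAt_pow (2 * m + 1) t).mul
      (((hasDerivAt_pow 2 t).const_sub 1).pow (n + 1))).congr_deriv ?_
    simp only [Nat.add_sub_cancel, Pi.pow_apply]
    push_cast
    ring
  have hint : ∀ k l : ℕ, IntervalIntegrable (fun t : ℝ => t ^ k * (1 - t ^ 2) ^ l) volume 0 1 :=
    fun k l => by apply Continuous.intervalIntegrable; fun_prop
  have hFTC := intervalIntegral.integral_eq_sub_of_hasDerivAt (fun t _ => hderiv t)
    (((hint _ _).const_mul _).sub ((hint _ _).const_mul _))
  rw [intervalIntegral.integral_sub ((hint _ _).const_mul _) ((hint _ _).const_mul _),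
    intervalIntegral.integral_const_mul, intervalIntegral.integral_const_mul] at hFTC
  norm_num at hFTC
  linarith

lemma integral_pow_mul_one_sub_sq_pow (n m : ℕ) :
    ∫ t in (0:ℝ)..1, t ^ (2 * m) * (1 - t ^ 2) ^ n
      = n.factorial * poch (1/2) m / poch (3/2) (n + m) := by
  induction n generalizing m with
  | zero =>
    have h := poch_half_mul m
    have := poch_pos (by norm_num : (0:ℝ) < 3/2) m
    simp only [pow_zero, mul_one, integral_pow, zero_add]
    field_simp
    push_cast
    linear_combination (-2) * h
  | succ n ih =>
    have h := integral_pow_mul_one_sub_sq_pow_succ n m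
    rw [ih, poch_succ_right, show n + (m + 1) = n + 1 + m by ring] at h
    have := poch_pos (by norm_num : (0:ℝ) < 3/2) (n + 1 + m)
    have hm : (2 * m + 1 : ℝ) ≠ 0 := by positivity
    field_simp at h
    rw [Nat.factorial_succ, eq_div_iff this.ne']
    apply mul_left_cancel₀ hm
    push_cast
    linear_combination h

lemma tsum_eq_one_sub_mul_tsum_add_mul_tsum {a b c : ℕ → ℝ} {y z : ℝ} (hb : Summable b)
    (hc : Summable c) (h0 : a 0 = b 0) (hsucc : ∀ m, a (m + 1) = b (m + 1) - y * b m + z * c m) :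
    ∑' m, a m = (1 - y) * ∑' m, b m + z * ∑' m, c m := by
  have hb' := (summable_nat_add_iff 1).mpr hb
  have ha' : Summable fun m => a (m + 1) := by
    simp only [hsucc]; exact (hb'.sub (hb.mul_left y)).add (hc.mul_left z)
  rw [((summable_nat_add_iff 1).mp ha').tsum_eq_zero_add, hb.tsum_eq_zero_add, h0,
    tsum_congr hsucc, (hb'.sub (hb.mul_left y)).tsum_add (hc.mul_left z),
    hb'.tsum_sub (hb.mul_left y), tsum_mul_left, tsum_mul_left, hb.tsum_eq_zero_add]
  ring

theorem ae_summable_of_summable_integral_norm {α E ι : Type*} [MeasurableSpace α]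
    {μ : Measure α} [NormedAddCommGroup E] [CompleteSpace E] [Countable ι] {F : ι → α → E}
    (hF_int : ∀ i, Integrable (F i) μ) (hF_sum : Summable fun i ↦ ∫ a, ‖F i a‖ ∂μ) :
    ∀ᵐ a ∂μ, Summable fun i ↦ F i a := by
  have h := summable_norm_of_tsum_eLpNorm_ne_top le_rfl (fun i ↦ (hF_int i).1) ?_
  · filter_upwards [h] with a ha using ha.of_norm
  simp only [eLpNorm_one_eq_lintegral_enorm, ← ofReal_integral_norm_eq_lintegral_enorm (hF_int _)]
  rw [← ENNReal.ofReal_tsum_of_nonneg (fun i ↦ integral_nonneg fun a ↦ norm_nonneg _) hF_sum]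
  exact ENNReal.ofReal_ne_top

noncomputable def appellTerm (α β β' γ x y : ℝ) (p : ℕ × ℕ) : ℝ :=
  poch α (p.1 + p.2) * poch β p.1 * poch β' p.2 /
    (poch γ (p.1 + p.2) * p.1.factorial * p.2.factorial) * x ^ p.1 * y ^ p.2

lemma appellF1_eq_tsum (α β β' γ x y : ℝ) :
    appellF1 α β β' γ x y = ∑' p, appellTerm α β β' γ x y p := rfl

lemma abs_appellTerm_le {α β β' γ x y C : ℝ} (hγ : 0 < γ) (p : ℕ × ℕ)
    (h : |poch α (p.1 + p.2) * poch β p.1 * poch β' p.2|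
      ≤ C * (poch γ (p.1 + p.2) * p.1.factorial * p.2.factorial)) :
    |appellTerm α β β' γ x y p| ≤ C * (|x| ^ p.1 * |y| ^ p.2) := by
  have hpos : 0 < poch γ (p.1 + p.2) * p.1.factorial * p.2.factorial := by
    have := poch_pos hγ (p.1 + p.2); positivity
  rw [appellTerm, abs_mul, abs_mul, abs_div, abs_of_pos hpos, abs_pow, abs_pow, mul_assoc]
  gcongr
  exact (div_le_iff₀ hpos).mpr h

lemma summable_abs_appellTerm {α β β' γ x y : ℝ} (C : ℝ) (hγ : 0 < γ) (hx : |x| < 1)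
    (hy : |y| < 1) (h : ∀ n m : ℕ, |poch α (n + m) * poch β n * poch β' m|
      ≤ C * (poch γ (n + m) * n.factorial * m.factorial)) :
    Summable fun p => |appellTerm α β β' γ x y p| := by
  have hgeom : Summable fun p : ℕ × ℕ => |x| ^ p.1 * |y| ^ p.2 :=
    (summable_geometric_of_lt_one (abs_nonneg x) hx).mul_of_nonneg
      (summable_geometric_of_lt_one (abs_nonneg y) hy) (fun _ => by positivity)
      (fun _ => by positivity)
  exact (hgeom.mul_left C).of_nonneg_of_le (fun _ => abs_nonneg _)
    fun p => abs_appellTerm_le hγ p (h p.1 p.2)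

lemma summable_abs_appellTerm_neg_half {x y : ℝ} (hx : |x| < 1) (hy : |y| < 1) :
    Summable fun p => |appellTerm (-(1/2)) (1/2) (1/2) (3/2) x y p| := by
  refine summable_abs_appellTerm 1 (by norm_num) hx hy fun n m => ?_
  have hα := (abs_poch_neg_half_le (n + m)).trans (poch_le_poch (by norm_num) (by norm_num) _ :
    poch (1/2) (n + m) ≤ poch (3/2) (n + m))
  have hβ := poch_half_le_factorial n
  have hβ' := poch_half_le_factorial m
  have := poch_nonneg (by norm_num : (0:ℝ) ≤ 1/2) n
  have := poch_nonneg (by norm_num : (0:ℝ) ≤ 1/2) m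
  have := poch_nonneg (by norm_num : (0:ℝ) ≤ 3/2) (n + m)
  rw [abs_mul, abs_mul, abs_of_nonneg (poch_nonneg (by norm_num) n),
    abs_of_nonneg (poch_nonneg (by norm_num) m), one_mul]
  gcongr

lemma summable_abs_appellTerm_half {x y γ : ℝ} (hγ : 3/2 ≤ γ) (hx : |x| < 1) (hy : |y| < 1) :
    Summable fun p => |appellTerm (1/2) (-(1/2)) (3/2) γ x y p| := by
  refine summable_abs_appellTerm 2 (by linarith) hx hy fun n m => ?_
  have hβ := (abs_poch_neg_half_le n).trans (poch_half_le_factorial n)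
  have hβ' : poch (3/2) m ≤ 2 * (m + 1) * m.factorial := by
    have h := poch_half_le_factorial (m + 1)
    rw [poch_succ_left, Nat.factorial_succ] at h
    push_cast at h
    norm_num at h
    linarith
  have hα : poch (1/2) (n + m) * (m + 1) ≤ poch γ (n + m) := by
    have h := poch_half_mul (n + m)
    have := poch_nonneg (by norm_num : (0:ℝ) ≤ 1/2) (n + m)
    have := poch_le_poch (by norm_num) hγ (n + m)
    push_cast at h
    nlinarith
  have := poch_nonneg (by norm_num : (0:ℝ) ≤ 1/2) (n + m)
  have := poch_nonneg (by norm_num : (0:ℝ) ≤ 3/2) m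
  rw [abs_mul, abs_mul, abs_of_nonneg (poch_nonneg (by norm_num) (n + m)),
    abs_of_nonneg (poch_nonneg (by norm_num) m)]
  calc poch (1/2) (n + m) * |poch (-(1/2)) n| * poch (3/2) m
      ≤ poch (1/2) (n + m) * n.factorial * (2 * (m + 1) * m.factorial) := by gcongr
    _ = 2 * (poch (1/2) (n + m) * (m + 1) * n.factorial * m.factorial) := by ring
    _ ≤ 2 * (poch γ (n + m) * n.factorial * m.factorial) := by gcongr

lemma appellTerm_zero_right (x y : ℝ) (n : ℕ) :
    appellTerm (-(1/2)) (1/2) (1/2) (3/2) x y (n, 0)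
      = appellTerm (1/2) (-(1/2)) (3/2) (3/2) x y (n, 0) := by
  simp only [appellTerm, poch_zero, add_zero]; ring

lemma appellTerm_succ_right (x y : ℝ) (n m : ℕ) :
    appellTerm (-(1/2)) (1/2) (1/2) (3/2) x y (n, m + 1)
      = appellTerm (1/2) (-(1/2)) (3/2) (3/2) x y (n, m + 1)
        - y * appellTerm (1/2) (-(1/2)) (3/2) (3/2) x y (n, m)
        + y / 3 * appellTerm (1/2) (-(1/2)) (3/2) (5/2) x y (n, m) := by
  have e1 : poch (-(1/2)) (n + m + 1) = -(1/2) * poch (1/2) (n + m) := by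
    rw [poch_succ_left]; norm_num
  have e2 : poch (1/2) (m + 1) = 1/2 * poch (3/2) m := by rw [poch_succ_left]; norm_num
  have e3 : poch (5/2) (n + m) = 2/3 * (poch (3/2) (n + m) * (3/2 + (n + m : ℕ))) := by
    rw [← poch_succ_right, poch_succ_left]; ring_nf
  have hβ : poch (1/2) n = (1 - 2 * n) * poch (-(1/2)) n := by
    have h := poch_succ_left (-(1/2)) n
    rw [poch_succ_right] at h
    norm_num at h
    linarith
  have := poch_pos (by norm_num : (0:ℝ) < 3/2) (n + m)
  simp only [appellTerm, ← add_assoc]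
  rw [e1, e2, e3, poch_succ_right (3/2) m, poch_succ_right (3/2) (n + m),
    poch_succ_right (1/2) (n + m), hβ, Nat.factorial_succ]
  push_cast
  field_simp
  ring

lemma appellF1_contiguous {x y : ℝ} (hx : |x| < 1) (hy : |y| < 1) :
    appellF1 (-(1/2)) (1/2) (1/2) (3/2) x y
      = (1 - y) * appellF1 (1/2) (-(1/2)) (3/2) (3/2) x y
        + y / 3 * appellF1 (1/2) (-(1/2)) (3/2) (5/2) x y := by
  have hT := (summable_abs_appellTerm_neg_half hx hy).of_abs
  have h3 := (summable_abs_appellTerm_half le_rfl hx hy).of_abs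
  have h5 := (summable_abs_appellTerm_half (γ := 5/2) (by norm_num) hx hy).of_abs
  simp only [appellF1_eq_tsum]
  rw [hT.tsum_prod, h3.tsum_prod, h5.tsum_prod, ← tsum_mul_left, ← tsum_mul_left,
    ← (h3.prod.mul_left _).tsum_add (h5.prod.mul_left _)]
  exact tsum_congr fun n => tsum_eq_one_sub_mul_tsum_add_mul_tsum (h3.prod_factor n)
    (h5.prod_factor n) (appellTerm_zero_right x y n) (appellTerm_succ_right x y n)

noncomputable def expansionCoeff (ε δ : ℝ) (p : ℕ × ℕ) : ℝ :=
  poch (1/2) p.1 * poch (-(1/2)) p.1 / (poch 1 p.1 * p.1.factorial) * ε ^ p.1 *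
    (poch (p.1 - 1/2) p.2 / p.2.factorial * δ ^ p.2)

noncomputable def expansionTerm (ε δ : ℝ) (p : ℕ × ℕ) (t : ℝ) : ℝ :=
  expansionCoeff ε δ p * (t ^ (2 * p.2) * (1 - t ^ 2) ^ p.1)

lemma sqrt_mul_gaussF_eq_tsum_tsum {ε δ t : ℝ} (hδ : |δ| < 1) (ht : t ^ 2 ≤ 1) :
    √(1 - δ * t ^ 2) * gaussF (1/2) (-(1/2)) 1 ((1 - t ^ 2) / (1 - δ * t ^ 2) * ε)
      = ∑' n, ∑' m, expansionTerm ε δ (n, m) t := by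
  have hδt : |δ * t ^ 2| < 1 := by
    rw [abs_mul, abs_of_nonneg (sq_nonneg t)]
    nlinarith [abs_nonneg δ, sq_nonneg t]
  have hy : 0 < 1 - δ * t ^ 2 := by linarith [le_abs_self (δ * t ^ 2)]
  rw [gaussF, ← tsum_mul_left]
  congr 1; ext n
  have hpow : √(1 - δ * t ^ 2) / (1 - δ * t ^ 2) ^ n = (1 - δ * t ^ 2) ^ (-((n:ℝ) - 1/2)) := by
    rw [sqrt_eq_rpow, ← rpow_natCast (1 - δ * t ^ 2) n, ← rpow_sub hy]
    ring_nf
  have hbin := (hasSum_poch_div_factorial_mul_pow ((n:ℝ) - 1/2) hδt).tsum_eq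
  calc √(1 - δ * t ^ 2) * (poch (1/2) n * poch (-(1/2)) n / (poch 1 n * n.factorial)
          * ((1 - t ^ 2) / (1 - δ * t ^ 2) * ε) ^ n)
      = poch (1/2) n * poch (-(1/2)) n / (poch 1 n * n.factorial) * ε ^ n * (1 - t ^ 2) ^ n
          * (√(1 - δ * t ^ 2) / (1 - δ * t ^ 2) ^ n) := by rw [mul_pow, div_pow]; ring
    _ = _ := by
      rw [hpow, ← hbin, ← tsum_mul_left]
      congr 1; ext m
      simp only [expansionTerm, expansionCoeff, mul_pow, ← pow_mul]
      ring

lemma integral_expansionTerm (ε δ : ℝ) (p : ℕ × ℕ) :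
    ∫ t in (0:ℝ)..1, expansionTerm ε δ p t = appellTerm (-(1/2)) (1/2) (1/2) (3/2) ε δ p := by
  obtain ⟨n, m⟩ := p
  have hsplit : poch (-(1/2)) (n + m) = poch (-(1/2)) n * poch (n - 1/2) m := by
    rw [poch_add]; ring_nf
  have := poch_pos (by norm_num : (0:ℝ) < 3/2) (n + m)
  simp only [expansionTerm]
  rw [intervalIntegral.integral_const_mul, integral_pow_mul_one_sub_sq_pow]
  simp only [expansionCoeff, appellTerm, poch_one, hsplit]
  field_simp

lemma integral_norm_expansionTerm (ε δ : ℝ) (p : ℕ × ℕ) :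
    ∫ t in Set.Ioc (0:ℝ) 1, ‖expansionTerm ε δ p t‖
      = |appellTerm (-(1/2)) (1/2) (1/2) (3/2) ε δ p| := by
  have hnonneg : ∀ t ∈ Set.Ioc (0:ℝ) 1, 0 ≤ t ^ (2 * p.2) * (1 - t ^ 2) ^ p.1 := fun t ht => by
    have : t ^ 2 ≤ 1 := by nlinarith [ht.1, ht.2]
    have : 0 ≤ 1 - t ^ 2 := by linarith
    have : 0 < t := ht.1
    positivity
  rw [setIntegral_congr_fun measurableSet_Ioc fun t ht => by
      rw [expansionTerm, norm_mul, Real.norm_eq_abs, Real.norm_of_nonneg (hnonneg t ht)],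
    integral_const_mul, ← integral_expansionTerm, intervalIntegral.integral_of_le zero_le_one]
  simp only [expansionTerm, integral_const_mul, abs_mul,
    abs_of_nonneg (setIntegral_nonneg measurableSet_Ioc hnonneg)]

lemma integral_sqrt_mul_gaussF_eq_appellF1 {ε δ : ℝ} (hε : |ε| < 1) (hδ : |δ| < 1) :
    ∫ t in (0:ℝ)..1, √(1 - δ * t ^ 2) * gaussF (1/2) (-(1/2)) 1 ((1 - t ^ 2) / (1 - δ * t ^ 2) * ε)
      = appellF1 (-(1/2)) (1/2) (1/2) (3/2) ε δ := by
  have hint : ∀ p, Integrable (expansionTerm ε δ p) (volume.restrict (Set.Ioc 0 1)) :=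
    fun p => Continuous.integrableOn_Ioc (by unfold expansionTerm; fun_prop)
  have hsum : Summable fun p => ∫ t in Set.Ioc (0:ℝ) 1, ‖expansionTerm ε δ p t‖ := by
    simpa only [integral_norm_expansionTerm] using summable_abs_appellTerm_neg_half hε hδ
  have hae := ae_summable_of_summable_integral_norm hint hsum
  rw [intervalIntegral.integral_of_le zero_le_one, appellF1_eq_tsum]
  calc _ = ∫ t in Set.Ioc (0:ℝ) 1, ∑' p, expansionTerm ε δ p t := by
        refine integral_congr_ae ?_
        filter_upwards [hae, ae_restrict_mem measurableSet_Ioc] with t hsum_t ht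
        rw [sqrt_mul_gaussF_eq_tsum_tsum hδ (by nlinarith [ht.1, ht.2]), hsum_t.tsum_prod]
    _ = ∑' p, ∫ t in Set.Ioc (0:ℝ) 1, expansionTerm ε δ p t :=
        (integral_tsum_of_summable_integral_norm hint hsum).symm
    _ = _ := tsum_congr fun p => by
        rw [← intervalIntegral.integral_of_le zero_le_one, integral_expansionTerm]

lemma abs_one_sub_sq_div_sq_lt_one {c d : ℝ} (hc : 0 < c) (hcd : c < d) :
    |1 - c ^ 2 / d ^ 2| < 1 := by
  have hd : 0 < d := hc.trans hcd
  have : 0 < c ^ 2 / d ^ 2 := by positivity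
  have : c ^ 2 / d ^ 2 < 1 := by rw [div_lt_one (by positivity)]; nlinarith
  rw [abs_lt]; constructor <;> linarith

/-- For `a > b > c > 0`, with `ε = 1 - c²/b²`, `δ = 1 - c²/a²`:
`∫₀¹ √(1-δt²)·₂F₁(1/2,-1/2;1;((1-t²)/(1-δt²))·ε) dt
  = (1-δ)·F₁(1/2;-1/2,3/2;3/2;ε,δ) + (δ/3)·F₁(1/2;-1/2,3/2;5/2;ε,δ)`. -/
theorem integral_gaussF_eq_appell (a b c : ℝ) (hc : 0 < c) (hcb : c < b) (hba : b < a) :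
    (∫ t in (0:ℝ)..1, Real.sqrt (1 - (1 - c^2/a^2) * t^2) *
        gaussF (1/2) (-(1/2)) 1 (((1 - t^2)/(1 - (1 - c^2/a^2) * t^2)) * (1 - c^2/b^2)))
      = (1 - (1 - c^2/a^2)) * appellF1 (1/2) (-(1/2)) (3/2) (3/2) (1 - c^2/b^2) (1 - c^2/a^2)
        + ((1 - c^2/a^2)/3) * appellF1 (1/2) (-(1/2)) (3/2) (5/2) (1 - c^2/b^2) (1 - c^2/a^2) := by
  have hε := abs_one_sub_sq_div_sq_lt_one hc hcb
  have hδ := abs_one_sub_sq_div_sq_lt_one hc (hcb.trans hba)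
  rw [integral_sqrt_mul_gaussF_eq_appellF1 hε hδ, appellF1_contiguous hε hδ]
end
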